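/- Let T be an observation tree with basis S and frontier F, where S is complete, and let H be a complete Mealy machine containing the basis. Suppose σ ∈ I* is such that δ^T(q0^T, σ) is defined, r := δ^T(q0^T, σ) ∈ S ∪ F, and q := δ^H(q0^H, σ) satisfies q # r in T. Then H is not a hypothesis for T. -/

import Mathlib

open scoped Classical

/-- A Mealy machine over input alphabet `I` and output alphabet `O`, with state
type `Q`, initial state `q0`, and a partial combined output/transition map
`trans : Q × I ⇀ O × Q` (so the output and transition functions are defined on
exactly the same pairs). -/
structure Mealy (Q I O : Type) where
  q0 : Q
  trans : Q → I → Option (O × Q)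

namespace Mealy

variable {Q Q' I O : Type}

/-- Extension of the combined output/transition map to input words. -/
def stepStar (M : Mealy Q I O) : Q → List I → Option (List O × Q)
  | q, [] => some ([], q)
  | q, i :: σ => (M.trans q i).bind fun p =>
      (stepStar M p.2 σ).map fun r => (p.1 :: r.1, r.2)

/-- `λ(q, σ)`: the output word produced from `q` on input word `σ` (if defined);
this is also the semantics `⟦q⟧ : I* ⇀ O*` of the state `q`. -/
def outStar (M : Mealy Q I O) (q : Q) (σ : List I) : Option (List O) :=
  (M.stepStar q σ).map Prod.fst

/-- `δ(q, σ)`: the state reached from `q` on input word `σ` (if defined). -/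
def delStar (M : Mealy Q I O) (q : Q) (σ : List I) : Option Q :=
  (M.stepStar q σ).map Prod.snd

/-- `σ ⊢ q # p`: the word `σ` witnesses apartness of `q` and `p`. -/
def ApartW (M : Mealy Q I O) (σ : List I) (q p : Q) : Prop :=
  (M.outStar q σ).isSome ∧ (M.outStar p σ).isSome ∧ M.outStar q σ ≠ M.outStar p σ

/-- `q # p`: states `q` and `p` are apart. -/
def Apart (M : Mealy Q I O) (q p : Q) : Prop := ∃ σ, M.ApartW σ q p

/-- `q ≈ r`: states `q` (of `M`) and `r` (of `N`) are equivalent, i.e. have equal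
semantics `⟦q⟧ = ⟦r⟧` as partial maps `I* ⇀ O*`. -/
def StateEquiv (M : Mealy Q I O) (N : Mealy Q' I O) (q : Q) (r : Q') : Prop :=
  ∀ σ, M.outStar q σ = N.outStar r σ

/-- A functional simulation `f : M → N`. -/
def FunSim (M : Mealy Q I O) (N : Mealy Q' I O) (f : Q → Q') : Prop :=
  f M.q0 = N.q0 ∧
    ∀ q i o q'', M.trans q i = some (o, q'') → N.trans (f q) i = some (o, f q'')

/-- A Mealy machine is complete if its transition map is total. -/
def Complete (M : Mealy Q I O) : Prop := ∀ q i, (M.trans q i).isSome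

/-- A Mealy machine is a tree if every state is reached from the root by a
unique input word (its access sequence). -/
def IsTree (M : Mealy Q I O) : Prop :=
  ∀ q : Q, ∃! σ : List I, M.delStar M.q0 σ = some q

/-- `S` is a basis of the observation tree `T`: a subtree containing the root
whose states are pairwise apart. -/
structure IsBasis (T : Mealy Q I O) (S : Set Q) : Prop where
  root_mem : T.q0 ∈ S
  subtree_closed : ∀ q i o q', T.trans q i = some (o, q') → q' ∈ S → q ∈ S
  pairwise_apart : ∀ p ∈ S, ∀ q ∈ S, p ≠ q → T.Apart p q

/-- The frontier `F`: immediate non-basis successors of basis states. -/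
def frontier (T : Mealy Q I O) (S : Set Q) : Set Q :=
  {q' | q' ∉ S ∧ ∃ q ∈ S, ∃ i o, T.trans q i = some (o, q')}

/-- The basis `S` is complete: each basis state has a transition for each input. -/
def BasisComplete (T : Mealy Q I O) (S : Set Q) : Prop :=
  ∀ q ∈ S, ∀ i : I, (T.trans q i).isSome

/-- A Mealy machine `H` with state set `S` contains the basis `S` of `T`:
`δ^H(q0^H, access(q)) = q` for every `q ∈ S`. -/
def ContainsBasis (T : Mealy Q I O) (S : Set Q) (H : Mealy ↥S I O) : Prop :=
  ∀ (q : ↥S) (σ : List I), T.delStar T.q0 σ = some (q : Q) → H.delStar H.q0 σ = some q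

/-- `H` is a hypothesis for the observation tree `T` with basis `S`. -/
def IsHypothesis (T : Mealy Q I O) (S : Set Q) (H : Mealy ↥S I O) : Prop :=
  H.Complete ∧ ContainsBasis T S H ∧
    ∀ (q : ↥S) (i : I) (o' : O) (p' : ↥S), H.trans q i = some (o', p') →
      ∀ (o : O) (p : Q), T.trans (q : Q) i = some (o, p) → o = o' ∧ ¬ T.Apart p (p' : Q)

/-- The equivalence `≈` on the states of a single machine, as a setoid. -/
def equivSetoid (M : Mealy Q I O) : Setoid Q :=
  ⟨fun q r => M.StateEquiv M q r,
   ⟨fun _ _ => rfl, fun h σ => (h σ).symm, fun h1 h2 σ => (h1 σ).trans (h2 σ)⟩⟩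

/-- `R` is a bisimulation between `M` and `N`. -/
def IsBisimulation (M : Mealy Q I O) (N : Mealy Q' I O) (R : Q → Q' → Prop) : Prop :=
  R M.q0 N.q0 ∧
    ∀ q r, R q r → ∀ i o q', M.trans q i = some (o, q') →
      ∃ r', N.trans r i = some (o, r') ∧ R q' r'

end Mealy

/-! If `r ∈ S`, then `H` contains the basis, so it reaches `r` itself on `σ`, and `r # r` is
impossible. If `r` is in the frontier, it is the `i`-successor of a basis state `p`; as `T` is a
tree, `σ = access(p) · i`, so `q` is the `i`-successor of `p` in `H`, and the hypothesis
condition at `(p, i)` forbids `r # q`. -/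

namespace Mealy

variable {Q I O : Type}

theorem stepStar_append (M : Mealy Q I O) (q : Q) (σ τ : List I) :
    M.stepStar q (σ ++ τ) = (M.stepStar q σ).bind fun p =>
      (M.stepStar p.2 τ).map fun r => (p.1 ++ r.1, r.2) := by
  induction σ generalizing q with
  | nil => simp [stepStar]
  | cons i σ ih =>
    simp only [List.cons_append, stepStar]
    cases M.trans q i with
    | none => rfl
    | some p =>
      simp only [Option.bind_some, ih]
      cases M.stepStar p.2 σ <;> simp [Function.comp_def]

theorem delStar_append (M : Mealy Q I O) (q : Q) (σ τ : List I) :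
    M.delStar q (σ ++ τ) = (M.delStar q σ).bind fun p => M.delStar p τ := by
  simp only [delStar, stepStar_append]
  cases M.stepStar q σ <;> simp [Function.comp_def]

theorem delStar_singleton (M : Mealy Q I O) (q : Q) (i : I) :
    M.delStar q [i] = (M.trans q i).map Prod.snd := by
  cases h : M.trans q i <;> simp [delStar, stepStar, h]

theorem Apart.symm {M : Mealy Q I O} {q p : Q} : M.Apart q p → M.Apart p q :=
  fun ⟨σ, hq, hp, hne⟩ => ⟨σ, hp, hq, Ne.symm hne⟩

theorem not_apart_self (M : Mealy Q I O) (q : Q) : ¬ M.Apart q q :=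
  fun ⟨_, _, _, hne⟩ => hne rfl

theorem IsTree.access_unique {T : Mealy Q I O} (htree : T.IsTree) {σ τ : List I} {r : Q}
    (hσ : T.delStar T.q0 σ = some r) (hτ : T.delStar T.q0 τ = some r) : σ = τ :=
  (htree r).unique hσ hτ

namespace IsHypothesis

variable {T : Mealy Q I O} {S : Set Q} {H : Mealy ↥S I O}

theorem eq_of_mem_basis (hH : T.IsHypothesis S H) {σ : List I} {r : Q} {q : ↥S}
    (hr : T.delStar T.q0 σ = some r) (hrS : r ∈ S) (hq : H.delStar H.q0 σ = some q) :
    (q : Q) = r := by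
  have h := hH.2.1 ⟨r, hrS⟩ σ hr
  rw [hq, Option.some_inj] at h
  rw [h]

theorem not_apart_of_trans (hH : T.IsHypothesis S H) {p q : ↥S} {i : I} {o : O} {r : Q}
    (hT : T.trans p i = some (o, r)) (hq : H.delStar p [i] = some q) :
    ¬ T.Apart r q := by
  obtain ⟨⟨o', q'⟩, hpi⟩ := Option.isSome_iff_exists.mp (hH.1 p i)
  rw [delStar_singleton, hpi, Option.map_some, Option.some_inj] at hq
  subst hq
  exact (hH.2.2 p i o' q' hpi o r hT).2

theorem not_apart_of_mem_frontier (hH : T.IsHypothesis S H) (htree : T.IsTree)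
    {σ : List I} {r : Q} {q : ↥S} (hr : T.delStar T.q0 σ = some r)
    (hrF : r ∈ T.frontier S) (hq : H.delStar H.q0 σ = some q) :
    ¬ T.Apart q r := by
  obtain ⟨-, p, hpS, i, o, hpr⟩ := hrF
  obtain ⟨τ, hτ, -⟩ := htree p
  have hτr : T.delStar T.q0 (τ ++ [i]) = some r := by
    rw [delStar_append, hτ, Option.bind_some, delStar_singleton, hpr, Option.map_some]
  obtain rfl := htree.access_unique hr hτr
  rw [delStar_append, hH.2.1 ⟨p, hpS⟩ τ hτ, Option.bind_some] at hq
  exact fun hap => hH.not_apart_of_trans (p := ⟨p, hpS⟩) hpr hq hap.symm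

end IsHypothesis

end Mealy

theorem statement_14_general {Q I O : Type}
    (T : Mealy Q I O) (htree : T.IsTree) (S : Set Q) (H : Mealy ↥S I O)
    (σ : List I) (r : Q) (hr : T.delStar T.q0 σ = some r)
    (hrSF : r ∈ S ∪ T.frontier S)
    (q : ↥S) (hq : H.delStar H.q0 σ = some q)
    (hap : T.Apart (q : Q) r) :
    ¬ T.IsHypothesis S H := by
  intro hH
  rcases hrSF with hrS | hrF
  · exact T.not_apart_self r (hH.eq_of_mem_basis hr hrS hq ▸ hap)
  · exact hH.not_apart_of_mem_frontier htree hr hrF hq hap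

/-- Let `T` be an observation tree with complete basis `S` and
`H` a complete Mealy machine containing the basis.  If `σ ∈ I*` is such that
`r := δ^T(q0^T, σ)` is defined and lies in `S ∪ F`, and `q := δ^H(q0^H, σ)`
satisfies `q # r` in `T`, then `H` is not a hypothesis for `T`. -/
theorem statement_14 {Q I O : Type} [Fintype I] [Fintype Q]
    (T : Mealy Q I O) (htree : T.IsTree) (S : Set Q) (hS : T.IsBasis S)
    (hcomp : T.BasisComplete S) (H : Mealy ↥S I O)
    (hHcomplete : H.Complete) (hHbasis : T.ContainsBasis S H)
    (σ : List I) (r : Q) (hr : T.delStar T.q0 σ = some r)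
    (hrSF : r ∈ S ∪ T.frontier S)
    (q : ↥S) (hq : H.delStar H.q0 σ = some q)
    (hap : T.Apart (q : Q) r) :
    ¬ T.IsHypothesis S H :=
  statement_14_general T htree S H σ r hr hrSF q hq hap
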